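/- For every N > 0 and every a ∈ ℝ, ∫_ℝ q̃(y)²/q₀(y) dy = cosh(2a²/N) = ½·(exp(2a²/N) + exp(−2a²/N)). -/

import Mathlib

open MeasureTheory

/-- Density of the Gaussian distribution with mean `0` and variance `N/2`. -/
noncomputable def q0 (N z : ℝ) : ℝ := (Real.sqrt (Real.pi * N))⁻¹ * Real.exp (-z ^ 2 / N)

/-- Density of the Gaussian distribution with mean `a` and variance `N/2`. -/
noncomputable def qa (N a z : ℝ) : ℝ := (Real.sqrt (Real.pi * N))⁻¹ * Real.exp (-(z - a) ^ 2 / N)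

/-- The binary mixture density `½ q_a + ½ q_{-a}`. -/
noncomputable def qmix (N a z : ℝ) : ℝ := (1 / 2) * qa N a z + (1 / 2) * qa N (-a) z

/-- The log-likelihood ratio `log (q̃(z)/q₀(z))`. -/
noncomputable def llr (N a z : ℝ) : ℝ := Real.log (qmix N a z / q0 N z)

/-!
Completing the square, `q_b q_c / q₀ = e^{2bc/N} q_{b+c}` pointwise. Expanding `q̃²` therefore
writes `q̃²/q₀` as `¼ e^{2a²/N} (q_{2a} + q_{-2a}) + ½ e^{-2a²/N} q₀`, a combination of Gaussian
densities, each of total mass one.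
-/

open ProbabilityTheory

lemma q0_eq_qa_zero (N : ℝ) : q0 N = qa N 0 := by
  ext z
  simp [q0, qa]

lemma qa_eq_gaussianPDFReal {N : ℝ} (hN : 0 < N) (b : ℝ) :
    qa N b = gaussianPDFReal b (N / 2).toNNReal := by
  ext z
  rw [gaussianPDFReal, Real.coe_toNNReal _ (by positivity), qa]
  congr 3 <;> ring

lemma integrable_qa {N : ℝ} (hN : 0 < N) (b : ℝ) : Integrable (qa N b) := by
  rw [qa_eq_gaussianPDFReal hN]
  exact integrable_gaussianPDFReal _ _

lemma integral_qa {N : ℝ} (hN : 0 < N) (b : ℝ) : ∫ z, qa N b z = 1 := by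
  rw [qa_eq_gaussianPDFReal hN]
  exact integral_gaussianPDFReal_eq_one _ (by simpa using hN)

lemma qa_mul_qa_div_q0 (N b c z : ℝ) :
    qa N b z * qa N c z / q0 N z = Real.exp (2 * b * c / N) * qa N (b + c) z := by
  have hexp : Real.exp (2 * b * c / N) * Real.exp (-(z - (b + c)) ^ 2 / N) =
      Real.exp (-(z - b) ^ 2 / N) * Real.exp (-(z - c) ^ 2 / N) / Real.exp (-z ^ 2 / N) := by
    rw [← Real.exp_add, ← Real.exp_add, ← Real.exp_sub]
    congr 1
    ring
  simp only [qa, q0]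
  rcases eq_or_ne (Real.sqrt (Real.pi * N)) 0 with hs | hs
  · simp [hs]
  · rw [mul_left_comm (Real.exp _), hexp]
    field_simp

lemma qmix_sq_div_q0 (N a z : ℝ) :
    qmix N a z ^ 2 / q0 N z =
      (1 / 4) * Real.exp (2 * a ^ 2 / N) * (qa N (2 * a) z + qa N (-(2 * a)) z) +
        (1 / 2) * Real.exp (-(2 * a ^ 2 / N)) * q0 N z := by
  have hsq : qmix N a z ^ 2 / q0 N z =
      (1 / 4) * (qa N a z * qa N a z / q0 N z + qa N (-a) z * qa N (-a) z / q0 N z) +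
        (1 / 2) * (qa N a z * qa N (-a) z / q0 N z) := by
    rw [qmix]; ring
  rw [hsq, qa_mul_qa_div_q0, qa_mul_qa_div_q0, qa_mul_qa_div_q0, q0_eq_qa_zero]
  ring_nf

/-- `∫ q̃²/q₀ = cosh(2a²/N) = ½ (e^{2a²/N} + e^{-2a²/N})`. -/
theorem integral_qmix_sq_div_q0 (N a : ℝ) (hN : 0 < N) :
    (∫ y : ℝ, (qmix N a y) ^ 2 / q0 N y) = Real.cosh (2 * a ^ 2 / N) ∧
    Real.cosh (2 * a ^ 2 / N) =
      (1 / 2) * (Real.exp (2 * a ^ 2 / N) + Real.exp (-(2 * a ^ 2 / N))) := by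
  have hcosh : Real.cosh (2 * a ^ 2 / N) =
      (1 / 2) * (Real.exp (2 * a ^ 2 / N) + Real.exp (-(2 * a ^ 2 / N))) := by
    rw [Real.cosh_eq]; ring
  refine ⟨?_, hcosh⟩
  have hpair : Integrable fun y => qa N (2 * a) y + qa N (-(2 * a)) y :=
    (integrable_qa hN _).add (integrable_qa hN _)
  have hq0 : Integrable (q0 N) := q0_eq_qa_zero N ▸ integrable_qa hN 0
  simp_rw [qmix_sq_div_q0]
  rw [integral_add (hpair.const_mul _) (hq0.const_mul _), integral_const_mul, integral_const_mul,
    integral_add (integrable_qa hN _) (integrable_qa hN _), integral_qa hN, integral_qa hN,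
    q0_eq_qa_zero, integral_qa hN, hcosh]
  ring
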